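/- arXiv:1004.0163 — 3 statements merged into one kernel-verified Lean document; each statement's English description precedes it below -/
import Mathlib

section
/- For every s ∈ ℂ with Re(s) > 1, every τ in the complex upper half-plane, and every γ = [[a,b],[c,d]] ∈ SL(2,ℤ), one has E(s, γ·τ) = E(s, τ), where γ·τ = (aτ+b)/(cτ+d) is the Möbius action and E(s, τ) = Σ_{(m,n) ∈ ℤ²∖{(0,0)}} (Im τ)^s / |mτ + n|^{2s}. -/
/-!
Substituting `(m, n) ↦ (m, n) γ` permutes the nonzero lattice points. For `γ = [[a, b], [c, d]]`
one has `m (γ τ) + n = (m' τ + n') / (c τ + d)` with `(m', n') = (m, n) γ`, and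
`Im (γ τ) = Im τ / |c τ + d|²`, so the factors `|c τ + d|⁻²` cancel in
`Im (γ τ) / |m (γ τ) + n|² = Im τ / |m' τ + n'|²`. The summand of `E(s, τ)` is the `s`-th power of
the nonnegative real `Im τ / |m τ + n|²`, so the two series agree after reindexing.
-/

open scoped MatrixGroups

/-- The nonholomorphic Eisenstein series E(s, τ) = Σ_{(m,n) ≠ (0,0)} (Im τ)^s / |mτ+n|^{2s}. -/
noncomputable def eisensteinSL2 (s τ : ℂ) : ℂ :=
  ∑' p : {p : ℤ × ℤ // p ≠ 0},
    (τ.im : ℂ) ^ s / (‖(p.1.1 : ℂ) * τ + (p.1.2 : ℂ)‖ : ℂ) ^ (2 * s)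

open UpperHalfPlane

namespace Matrix.SpecialLinearGroup

variable {R : Type*} [CommRing R]

lemma det_fin_two_eq_one (γ : SL(2, R)) : γ 0 0 * γ 1 1 - γ 0 1 * γ 1 0 = 1 := by
  rw [← det_fin_two, det_coe]

def vecMulProdEquiv (γ : SL(2, R)) : R × R ≃ R × R where
  toFun p := (p.1 * γ 0 0 + p.2 * γ 1 0, p.1 * γ 0 1 + p.2 * γ 1 1)
  invFun p := (p.1 * γ 1 1 - p.2 * γ 1 0, p.2 * γ 0 0 - p.1 * γ 0 1)
  left_inv p := Prod.ext (by linear_combination p.1 * γ.det_fin_two_eq_one)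
    (by linear_combination p.2 * γ.det_fin_two_eq_one)
  right_inv p := Prod.ext (by linear_combination p.1 * γ.det_fin_two_eq_one)
    (by linear_combination p.2 * γ.det_fin_two_eq_one)

lemma vecMulProdEquiv_ne_zero_iff (γ : SL(2, R)) {p : R × R} :
    γ.vecMulProdEquiv p ≠ 0 ↔ p ≠ 0 := by
  rw [Ne, ← Equiv.eq_symm_apply]
  simp [vecMulProdEquiv, Prod.mk_zero_zero]

end Matrix.SpecialLinearGroup

lemma ModularGroup.coe_smul_eq_div (γ : SL(2, ℤ)) (z : ℍ) :
    ((γ • z : ℍ) : ℂ) = (γ 0 0 * z + γ 0 1) / (γ 1 0 * z + γ 1 1) := by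
  rw [coe_specialLinearGroup_apply]
  simp only [algebraMap_int_eq, eq_intCast, Complex.ofReal_intCast]

lemma Complex.ofReal_div_sq_cpow {x r : ℝ} (hx : 0 ≤ x) (hr : 0 ≤ r) (s : ℂ) :
    ((x / r ^ 2 : ℝ) : ℂ) ^ s = (x : ℂ) ^ s / (r : ℂ) ^ (2 * s) := by
  rw [ofReal_div, div_cpow_ofReal_nonneg hx (sq_nonneg r), sq r, ofReal_mul,
    mul_cpow_ofReal_nonneg hr hr, cpow_ofNat_mul, sq]

noncomputable def eisensteinSL2Base (τ : ℂ) (p : ℤ × ℤ) : ℝ :=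
  τ.im / ‖(p.1 : ℂ) * τ + p.2‖ ^ 2

lemma eisensteinSL2_eq_tsum_cpow (s : ℂ) {τ : ℂ} (hτ : 0 ≤ τ.im) :
    eisensteinSL2 s τ = ∑' p : {p : ℤ × ℤ // p ≠ 0}, (eisensteinSL2Base τ p : ℂ) ^ s := by
  simp only [eisensteinSL2Base, Complex.ofReal_div_sq_cpow hτ (norm_nonneg _)]
  rfl

lemma eisensteinSL2Base_smul (γ : SL(2, ℤ)) (z : ℍ) (p : ℤ × ℤ) :
    eisensteinSL2Base (γ • z : ℍ) p = eisensteinSL2Base z (γ.vecMulProdEquiv p) := by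
  have hD : (γ 1 0 * z + γ 1 1 : ℂ) ≠ 0 := by
    simpa [ModularGroup.denom_apply] using denom_ne_zero γ z
  have hlin : (p.1 : ℂ) * ((γ • z : ℍ) : ℂ) + p.2 =
      ((p.1 * γ 0 0 + p.2 * γ 1 0 : ℤ) * z + (p.1 * γ 0 1 + p.2 * γ 1 1 : ℤ)) /
        (γ 1 0 * z + γ 1 1) := by
    rw [ModularGroup.coe_smul_eq_div, eq_div_iff hD, add_mul, mul_assoc, div_mul_cancel₀ _ hD]
    push_cast
    ring
  rw [eisensteinSL2Base, coe_im, ModularGroup.im_smul_eq_div_normSq, ModularGroup.denom_apply,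
    hlin, norm_div, Complex.normSq_eq_norm_sq, div_pow,
    div_div_div_cancel_right₀ (by simpa using hD)]
  rfl

theorem eisensteinSL2_invariant_general
    (s : ℂ) (τ : ℂ) (hτ : 0 < τ.im)
    (γ : Matrix.SpecialLinearGroup (Fin 2) ℤ) :
    eisensteinSL2 s ((((γ 0 0 : ℤ) : ℂ) * τ + ((γ 0 1 : ℤ) : ℂ)) /
        (((γ 1 0 : ℤ) : ℂ) * τ + ((γ 1 1 : ℤ) : ℂ)))
      = eisensteinSL2 s τ := by
  let z : ℍ := ⟨τ, hτ⟩
  let e : {p : ℤ × ℤ // p ≠ 0} ≃ {p : ℤ × ℤ // p ≠ 0} :=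
    γ.vecMulProdEquiv.subtypeEquiv fun _ => γ.vecMulProdEquiv_ne_zero_iff.symm
  rw [← ModularGroup.coe_smul_eq_div γ z, eisensteinSL2_eq_tsum_cpow s (γ • z).im_pos.le,
    eisensteinSL2_eq_tsum_cpow s hτ.le]
  exact (tsum_congr fun p => by rw [eisensteinSL2Base_smul]; rfl).trans (e.tsum_eq _)

/-- For Re(s) > 1, τ in the upper half-plane and γ ∈ SL(2,ℤ),
E(s, γ·τ) = E(s, τ) where γ·τ = (aτ+b)/(cτ+d). -/
theorem eisensteinSL2_invariant
    (s : ℂ) (hs : 1 < s.re) (τ : ℂ) (hτ : 0 < τ.im)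
    (γ : Matrix.SpecialLinearGroup (Fin 2) ℤ) :
    eisensteinSL2 s ((((γ 0 0 : ℤ) : ℂ) * τ + ((γ 0 1 : ℤ) : ℂ)) /
        (((γ 1 0 : ℤ) : ℂ) * τ + ((γ 1 1 : ℤ) : ℂ)))
      = eisensteinSL2 s τ :=
  eisensteinSL2_invariant_general s τ hτ γ
end

section
/- Let n ≥ 2. Every matrix A ∈ SL(n, ℚ) can be written as A = B·γ, where B ∈ SL(n, ℚ) is upper triangular and γ ∈ SL(n, ℤ) (i.e. γ has integer entries and determinant 1). In other words, SL(n, ℚ) = B(ℚ) · SL(n, ℤ), where B(ℚ) denotes the subgroup of upper-triangular matrices in SL(n, ℚ). -/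
/-!
Right multiplication by `SL(n, ℤ)` performs unimodular column operations, and we clear the
entries below the diagonal row by row, from the bottom up. The entry in row `i`, column `m < i`
is killed by a matrix acting on the columns `m, i` through an element of `SL(2, ℤ)` whose first
column is the primitive integer vector `(p, r)` with `a p + b r = 0`, where `a, b` are the entries
in columns `m, i` of row `i`. Rows below `i` vanish on both columns, so they are untouched.
Once `A γ` is upper triangular, `A = (A γ) γ⁻¹`.
-/

open Matrix
open scoped MatrixGroups

namespace Matrix

variable {ι κ R : Type*} [CommRing R] [DecidableEq ι]

lemma mul_submatrix_id_one [Fintype ι] {ρ : Type*} (M : Matrix ρ ι R) (v : κ → ι) :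
    M * (1 : Matrix ι ι R).submatrix id v = M.submatrix id v :=
  mul_submatrix_one (Equiv.refl ι) v M

lemma submatrix_one_mul_submatrix_one [Fintype ι] [DecidableEq κ] {v : κ → ι} (hv : Function.Injective v) :
    (1 : Matrix ι ι R).submatrix v id * (1 : Matrix ι ι R).submatrix id v = 1 := by
  rw [← submatrix_mul _ _ _ id _ Function.bijective_id, Matrix.one_mul, submatrix_one v hv]

variable [Fintype κ] [DecidableEq κ]

/-- For injective `v`, the matrix acting as `P` on the coordinates `v` and as the identity on the
others. Written as `1 + E (P - 1) Eᵀ`, its determinant is an instance of the Weinstein–Aronszajn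
identity. -/
def extendByIdentity (v : κ → ι) (P : Matrix κ κ R) : Matrix ι ι R :=
  1 + (1 : Matrix ι ι R).submatrix id v * (P - 1) * (1 : Matrix ι ι R).submatrix v id

variable {v : κ → ι}

theorem det_extendByIdentity [Fintype ι] (hv : Function.Injective v) (P : Matrix κ κ R) :
    (extendByIdentity v P).det = P.det := by
  rw [extendByIdentity, det_one_add_mul_comm, ← Matrix.mul_assoc,
    submatrix_one_mul_submatrix_one hv, Matrix.one_mul, add_sub_cancel]

theorem extendByIdentity_map {S : Type*} [CommRing S] (f : R →+* S) (P : Matrix κ κ R) :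
    (extendByIdentity v P).map f = extendByIdentity v (P.map f) := by
  simp only [extendByIdentity, Matrix.map_add _ (map_add f), Matrix.map_mul,
    Matrix.map_sub _ (map_sub f), ← submatrix_map, Matrix.map_one _ (map_zero f) (map_one f)]

theorem extendByIdentity_mul_submatrix_one [Fintype ι] (hv : Function.Injective v)
    (P : Matrix κ κ R) :
    extendByIdentity v P * (1 : Matrix ι ι R).submatrix id v =
      (1 : Matrix ι ι R).submatrix id v * P := by
  rw [extendByIdentity, Matrix.add_mul, Matrix.one_mul, Matrix.mul_assoc,
    submatrix_one_mul_submatrix_one hv, Matrix.mul_one, Matrix.mul_sub, Matrix.mul_one,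
    add_sub_cancel]

theorem extendByIdentity_apply_of_notMem (P : Matrix κ κ R) (t : ι) {l : ι}
    (hl : l ∉ Set.range v) :
    extendByIdentity v P t l = (1 : Matrix ι ι R) t l := by
  simp_all [extendByIdentity, mul_apply, one_apply]

variable [Fintype ι] {ρ : Type*}

theorem mul_extendByIdentity_apply (hv : Function.Injective v) (M : Matrix ρ ι R)
    (P : Matrix κ κ R) (k : ρ) (a : κ) :
    (M * extendByIdentity v P) k (v a) = ∑ b, M k (v b) * P b a := by
  have h : M * extendByIdentity v P * (1 : Matrix ι ι R).submatrix id v = M.submatrix id v * P := by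
    rw [Matrix.mul_assoc, extendByIdentity_mul_submatrix_one hv, ← Matrix.mul_assoc,
      mul_submatrix_id_one]
  rw [mul_submatrix_id_one] at h
  exact congrFun (congrFun h k) a

theorem mul_extendByIdentity_apply_of_notMem (M : Matrix ρ ι R) (P : Matrix κ κ R) (k : ρ)
    {l : ι} (hl : l ∉ Set.range v) :
    (M * extendByIdentity v P) k l = M k l := by
  simp [mul_apply, extendByIdentity_apply_of_notMem P _ hl, one_apply]

end Matrix

theorem exists_SL2Z_first_col_orthogonal (a b : ℚ) :
    ∃ P : SL(2, ℤ), a * P 0 0 + b * P 1 0 = 0 := by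
  rcases eq_or_ne a 0 with rfl | ha
  · exact ⟨1, by simp⟩
  set q := -b / a
  obtain ⟨u, w, huw⟩ := Rat.isCoprime_num_den q
  refine ⟨⟨!![q.num, -w; q.den, u], by rw [det_fin_two_of]; linear_combination huw⟩, ?_⟩
  have hq : a * q = -b := mul_div_cancel₀ _ ha
  simp only [of_apply, cons_val', cons_val_zero, cons_val_one, empty_val', cons_val_fin_one]
  push_cast
  linear_combination (-a) * Rat.mul_den_eq_num q + (q.den : ℚ) * hq

section

variable {ι : Type*} [Fintype ι] [DecidableEq ι]

theorem exists_SL_int_mul_apply_eq_zero (M : Matrix ι ι ℚ) {m i : ι} (hmi : m ≠ i) :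
    ∃ γ : SpecialLinearGroup ι ℤ, (M * (γ : SpecialLinearGroup ι ℚ)) i m = 0 ∧
      (∀ k l, l ≠ m → l ≠ i → (M * (γ : SpecialLinearGroup ι ℚ)) k l = M k l) ∧
      ∀ k, M k m = 0 → M k i = 0 → (M * (γ : SpecialLinearGroup ι ℚ)) k = M k := by
  obtain ⟨P, hP⟩ := exists_SL2Z_first_col_orthogonal (M i m) (M i i)
  have hv : Function.Injective ![m, i] := injective_pair_iff_ne.mpr hmi
  let γ : SpecialLinearGroup ι ℤ :=
    ⟨extendByIdentity ![m, i] P, by rw [det_extendByIdentity hv, P.det_coe]⟩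
  have hγ : ((γ : SpecialLinearGroup ι ℚ) : Matrix ι ι ℚ) =
      extendByIdentity ![m, i] ((P : Matrix (Fin 2) (Fin 2) ℤ).map (Int.castRingHom ℚ)) := by
    rw [SpecialLinearGroup.coe_matrix_coe]
    exact extendByIdentity_map _ _
  have hcol : ∀ k a, (M * (γ : SpecialLinearGroup ι ℚ)) k (![m, i] a) =
      M k m * P 0 a + M k i * P 1 a := by
    intro k a
    simp [hγ, mul_extendByIdentity_apply hv, Fin.sum_univ_two]
  have hrest : ∀ k l, l ≠ m → l ≠ i → (M * (γ : SpecialLinearGroup ι ℚ)) k l = M k l := by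
    intro k l hlm hli
    rw [hγ, mul_extendByIdentity_apply_of_notMem]
    simp [hlm, hli]
  refine ⟨γ, by simpa [hP] using hcol i 0, hrest, fun k hkm hki => funext fun l => ?_⟩
  by_cases hlm : l = m
  · subst hlm; simpa [hkm, hki] using hcol k 0
  by_cases hli : l = i
  · subst hli; simpa [hkm, hki] using hcol k 1
  exact hrest k l hlm hli

lemma mul_coe_mul (M : Matrix ι ι ℚ) (γ δ : SpecialLinearGroup ι ℤ) :
    M * ((γ * δ : SpecialLinearGroup ι ℤ) : SpecialLinearGroup ι ℚ) =
      M * (γ : SpecialLinearGroup ι ℚ) * (δ : SpecialLinearGroup ι ℚ) := by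
  simp [Matrix.mul_assoc]

variable [LinearOrder ι]

theorem exists_SL_int_mul_row_eq_zero (M : Matrix ι ι ℚ) (i : ι)
    (hM : ∀ k, i < k → ∀ l < k, M k l = 0) :
    ∃ γ : SpecialLinearGroup ι ℤ, (∀ k, i < k → (M * (γ : SpecialLinearGroup ι ℚ)) k = M k) ∧
      ∀ l < i, (M * (γ : SpecialLinearGroup ι ℚ)) i l = 0 := by
  suffices ∀ s : Finset ι, (∀ l ∈ s, l < i) → ∃ γ : SpecialLinearGroup ι ℤ,
      (∀ k, i < k → (M * (γ : SpecialLinearGroup ι ℚ)) k = M k) ∧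
      ∀ l ∈ s, (M * (γ : SpecialLinearGroup ι ℚ)) i l = 0 by
    simpa using this (Finset.univ.filter (· < i)) (by simp)
  intro s
  induction s using Finset.induction_on with
  | empty => exact fun _ => ⟨1, by simp⟩
  | insert m s hms ih =>
    intro hs
    obtain ⟨γ, hbelow, hrow⟩ := ih fun l hl => hs l (Finset.mem_insert_of_mem hl)
    have hmi : m < i := hs m (Finset.mem_insert_self m s)
    obtain ⟨δ, hδm, hδrest, hδrows⟩ := exists_SL_int_mul_apply_eq_zero
      (M * ((γ : SpecialLinearGroup ι ℚ) : Matrix ι ι ℚ)) hmi.ne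
    refine ⟨γ * δ, fun k hik => ?_, fun l hl => ?_⟩
    · rw [mul_coe_mul, hδrows k (by rw [hbelow k hik]; exact hM k hik m (hmi.trans hik))
        (by rw [hbelow k hik]; exact hM k hik i hik), hbelow k hik]
    · rw [mul_coe_mul]
      rcases Finset.mem_insert.mp hl with rfl | hl
      · exact hδm
      · rw [hδrest i l (ne_of_mem_of_not_mem hl hms) (hs l (Finset.mem_insert_of_mem hl)).ne]
        exact hrow l hl

theorem exists_SL_int_mul_blockTriangular (M : Matrix ι ι ℚ) :
    ∃ γ : SpecialLinearGroup ι ℤ, (M * (γ : SpecialLinearGroup ι ℚ)).BlockTriangular id := by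
  suffices ∀ s : Finset ι, IsUpperSet (s : Set ι) → ∃ γ : SpecialLinearGroup ι ℤ,
      ∀ k ∈ s, ∀ l < k, (M * (γ : SpecialLinearGroup ι ℚ)) k l = 0 by
    obtain ⟨γ, hγ⟩ := this Finset.univ (by simpa using isUpperSet_univ)
    exact ⟨γ, fun k l hlk => hγ k (Finset.mem_univ k) l hlk⟩
  intro s
  induction s using Finset.induction_on_min with
  | empty => exact fun _ => ⟨1, by simp⟩
  | insert a s has ih =>
    intro hup
    have habove : ∀ k, a < k → k ∈ s := fun k hak =>
      (Finset.mem_insert.mp (hup hak.le (Finset.mem_insert_self a s))).resolve_left hak.ne'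
    obtain ⟨γ, hγ⟩ := ih fun x y hxy hx => habove y ((has x hx).trans_le hxy)
    obtain ⟨δ, hδrows, hδa⟩ := exists_SL_int_mul_row_eq_zero
      (M * ((γ : SpecialLinearGroup ι ℚ) : Matrix ι ι ℚ)) a fun k hak => hγ k (habove k hak)
    refine ⟨γ * δ, fun k hk l hlk => ?_⟩
    rw [mul_coe_mul]
    rcases Finset.mem_insert.mp hk with rfl | hk
    · exact hδa l hlk
    · rw [hδrows k (has k hk)]
      exact hγ k hk l hlk

end

theorem SLnQ_eq_borel_mul_SLnZ_general (n : ℕ)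
    (A : Matrix.SpecialLinearGroup (Fin n) ℚ) :
    ∃ (B : Matrix.SpecialLinearGroup (Fin n) ℚ)
      (γ : Matrix.SpecialLinearGroup (Fin n) ℤ),
      (B : Matrix (Fin n) (Fin n) ℚ).BlockTriangular id ∧
      A = B * Matrix.SpecialLinearGroup.map (Int.castRingHom ℚ) γ := by
  obtain ⟨γ, hγ⟩ := exists_SL_int_mul_blockTriangular (A : Matrix (Fin n) (Fin n) ℚ)
  refine ⟨A * γ, γ⁻¹, hγ, ?_⟩
  rw [mul_assoc, ← map_mul, mul_inv_cancel, map_one, mul_one]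

/-- For n ≥ 2, every A ∈ SL(n,ℚ) factors as A = B·γ with B upper
triangular in SL(n,ℚ) and γ ∈ SL(n,ℤ); i.e. SL(n,ℚ) = B(ℚ)·SL(n,ℤ). -/
theorem SLnQ_eq_borel_mul_SLnZ (n : ℕ) (hn : 2 ≤ n)
    (A : Matrix.SpecialLinearGroup (Fin n) ℚ) :
    ∃ (B : Matrix.SpecialLinearGroup (Fin n) ℚ)
      (γ : Matrix.SpecialLinearGroup (Fin n) ℤ),
      (B : Matrix (Fin n) (Fin n) ℚ).BlockTriangular id ∧
      A = B * Matrix.SpecialLinearGroup.map (Int.castRingHom ℚ) γ :=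
  SLnQ_eq_borel_mul_SLnZ_general n A
end

section
/- Let d ≥ 1, let g be a real symmetric positive definite d × d matrix, and for τ = x + iy in the complex upper half-plane define the lattice sum Γ_{(d,d)}(τ) = (det g)^{1/2} Σ_{(m,n) ∈ ℤ^d × ℤ^d} exp( −(π/y) Σ_{i,j} g_{ij} (m_i − n_i τ)(m_j − n_j τ̄) ), noting that the exponent is real because g is symmetric. Then Γ_{(d,d)}(−1/τ) = Γ_{(d,d)}(τ) for every τ in the upper half-plane. -/
/-!
In this (Lagrangian) form of the lattice sum, inversion needs no Poisson summation: it acts on the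
summation lattice. Since `n + m / τ = -(m - n τ) / τ`, the substitution `(m, n) ↦ (n, -m)` turns
the quadratic form at `-1/τ` into the one at `τ` divided by `|τ|²`, while `Im (-1/τ) = Im τ / |τ|²`;
so the sum at `-1/τ` is a rearrangement of the sum at `τ`, term by term.
-/

open scoped ComplexConjugate

/-- The Narain lattice sum Γ_{(d,d)}(τ) for a metric g on the d-torus:
Γ_{(d,d)}(τ) = √(det g) Σ_{(m,n) ∈ ℤ^d × ℤ^d}
  exp(−(π/Im τ) Σ_{i,j} g i j (mᵢ − nᵢτ)(mⱼ − nⱼτ̄)). -/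
noncomputable def narainLatticeSum (d : ℕ) (g : Matrix (Fin d) (Fin d) ℝ) (τ : ℂ) : ℂ :=
  (Real.sqrt g.det : ℂ) *
    ∑' p : (Fin d → ℤ) × (Fin d → ℤ),
      Complex.exp (-(Real.pi / τ.im) *
        ∑ i : Fin d, ∑ j : Fin d, (g i j : ℂ) *
          ((p.1 i : ℂ) - (p.2 i : ℂ) * τ) * ((p.1 j : ℂ) - (p.2 j : ℂ) * conj τ))

namespace Narain

/-- The action of `S = !![0, -1; 1, 0]` on the pair of winding vectors `(m, n)`. -/
def sEquiv (ι : Type*) : (ι → ℤ) × (ι → ℤ) ≃ (ι → ℤ) × (ι → ℤ) :=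
  (Equiv.prodComm _ _).trans ((Equiv.refl _).prodCongr (Equiv.neg _))

variable {ι : Type*} [Fintype ι]

noncomputable def quadForm (g : Matrix ι ι ℝ) (τ : ℂ) (m n : ι → ℤ) : ℂ :=
  ∑ i : ι, ∑ j : ι, (g i j : ℂ) * ((m i : ℂ) - (n i : ℂ) * τ) * ((m j : ℂ) - (n j : ℂ) * conj τ)

noncomputable def exponent (g : Matrix ι ι ℝ) (τ : ℂ) (m n : ι → ℤ) : ℂ :=
  -(Real.pi / τ.im) * quadForm g τ m n

theorem quadForm_neg_one_div (g : Matrix ι ι ℝ) {τ : ℂ} (hτ : τ ≠ 0) (m n : ι → ℤ) :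
    quadForm g (-1 / τ) n (-m) = quadForm g τ m n / Complex.normSq τ := by
  have hτc : conj τ ≠ 0 := (map_ne_zero _).mpr hτ
  simp only [quadForm, Finset.sum_div, Complex.normSq_eq_conj_mul_self, map_div₀, map_neg,
    map_one, Pi.neg_apply, Int.cast_neg]
  refine Finset.sum_congr rfl fun i _ => Finset.sum_congr rfl fun j _ => ?_
  field_simp
  ring

theorem im_neg_one_div (τ : ℂ) : (-1 / τ).im = τ.im / Complex.normSq τ := by
  rw [neg_div, Complex.neg_im, one_div, Complex.inv_im, neg_div, neg_neg]

theorem exponent_neg_one_div (g : Matrix ι ι ℝ) {τ : ℂ} (hτ : τ ≠ 0) (m n : ι → ℤ) :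
    exponent g (-1 / τ) n (-m) = exponent g τ m n := by
  have hns : (Complex.normSq τ : ℂ) ≠ 0 := by exact_mod_cast (Complex.normSq_pos.mpr hτ).ne'
  rw [exponent, exponent, quadForm_neg_one_div g hτ, im_neg_one_div]
  push_cast
  field_simp

end Narain

open Narain in
theorem narainLatticeSum_inversion_invariant_general
    (d : ℕ) (g : Matrix (Fin d) (Fin d) ℝ)
    (τ : ℂ) (hτ : 0 < τ.im) :
    narainLatticeSum d g (-1 / τ) = narainLatticeSum d g τ := by
  have hτ0 : τ ≠ 0 := fun h => by simp [h] at hτ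
  unfold narainLatticeSum
  congr 1
  rw [← (sEquiv (Fin d)).tsum_eq]
  exact tsum_congr fun p => congrArg Complex.exp (exponent_neg_one_div g hτ0 p.1 p.2)

/-- For d ≥ 1 and g real symmetric positive definite, the Narain lattice
sum is invariant under the inversion τ ↦ −1/τ on the upper half-plane. -/
theorem narainLatticeSum_inversion_invariant
    (d : ℕ) (hd : 1 ≤ d) (g : Matrix (Fin d) (Fin d) ℝ)
    (hsymm : g.IsSymm) (hpos : g.PosDef)
    (τ : ℂ) (hτ : 0 < τ.im) :
    narainLatticeSum d g (-1 / τ) = narainLatticeSum d g τ :=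
  narainLatticeSum_inversion_invariant_general d g τ hτ
end
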